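/- arXiv:1701.08654 — 5 statements merged into one kernel-verified Lean document; each statement's English description precedes it below -/
import Mathlib

section
/- Let n ≥ 1 and let u, v, u', v' ∈ S_n ⊂ S_{n+1}. Then u·s_n·v = u'·s_n·v' in S_{n+1} if and only if there exists w ∈ S_{n+1} fixing both n and n+1 (i.e. w ∈ S_{n−1}) such that u' = u·w and v' = w^{-1}·v. (This equality of fibers underlies the bimodule isomorphism ℚ[S_n] ⊗_{ℚ[S_{n−1}]} ℚ[S_n] ≅ ℚ[S_n]·s_n·ℚ[S_n] given by a ⊗ b ↦ a s_n b.) -/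
/-- The transposition `s_n = (n, n+1)` in `S_{n+1}` (0-based: swapping `n-1` and `n`). -/
def sN (n : ℕ) : Equiv.Perm (Fin (n + 1)) :=
  Equiv.swap ⟨n - 1, by omega⟩ (Fin.last n)

/-!
Write `s = swap a b` and `u' = u w`. Cancelling `u` turns `u s v = u' s v'` into
`s v = w s v'`; evaluating at `b`, which `u, u', v, v'` fix, gives `w a = a`, and `w b = b`
since `u, u'` fix `b`. So `w` commutes with `s`, and cancelling `s` leaves `v = w v'`.
-/

namespace Equiv.Perm

variable {α : Type*} [DecidableEq α] {a b : α}

theorem commute_swap_of_apply_eq {w : Perm α} (hwa : w a = a) (hwb : w b = b) :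
    Commute w (swap a b) := by
  rw [Commute, SemiconjBy, mul_swap_eq_swap_mul, hwa, hwb]

theorem mul_swap_mul_eq_iff {u v u' v' : Perm α} (hu : u b = b) (hv : v b = b)
    (hu' : u' b = b) (hv' : v' b = b) :
    u * swap a b * v = u' * swap a b * v' ↔
      ∃ w : Perm α, w a = a ∧ w b = b ∧ u' = u * w ∧ v' = w⁻¹ * v := by
  constructor
  · intro h
    obtain ⟨w, rfl⟩ : ∃ w, u' = u * w := ⟨u⁻¹ * u', by group⟩
    have hwb : w b = b := u.injective (by rw [← mul_apply, hu', hu])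
    have hsv : swap a b * v = w * swap a b * v' := by
      simpa only [mul_assoc, mul_right_inj] using h
    have hwa : w a = a := by
      simpa [hv, hv'] using (DFunLike.congr_fun hsv b).symm
    refine ⟨w, hwa, hwb, rfl, ?_⟩
    rw [(commute_swap_of_apply_eq hwa hwb).eq, mul_assoc, mul_right_inj] at hsv
    rw [hsv, inv_mul_cancel_left]
  · rintro ⟨w, hwa, hwb, rfl, rfl⟩
    rw [mul_assoc u w, (commute_swap_of_apply_eq hwa hwb).eq]
    group

end Equiv.Perm

/-- For `n ≥ 1` and `u, v, u', v' ∈ S_n ⊂ S_{n+1}`: `u·s_n·v = u'·s_n·v'` iff there is a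
`w ∈ S_{n+1}` fixing both `n` and `n+1` (i.e. `w ∈ S_{n-1}`) with `u' = u·w` and
`v' = w⁻¹·v`. -/
theorem sandwich_fibers (n : ℕ) (u v u' v' : Equiv.Perm (Fin (n + 1)))
    (hu : u (Fin.last n) = Fin.last n) (hv : v (Fin.last n) = Fin.last n)
    (hu' : u' (Fin.last n) = Fin.last n) (hv' : v' (Fin.last n) = Fin.last n) :
    u * sN n * v = u' * sN n * v' ↔
      ∃ w : Equiv.Perm (Fin (n + 1)),
        w ⟨n - 1, by omega⟩ = (⟨n - 1, by omega⟩ : Fin (n + 1)) ∧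
        w (Fin.last n) = Fin.last n ∧ u' = u * w ∧ v' = w⁻¹ * v :=
  Equiv.Perm.mul_swap_mul_eq_iff hu hv hu' hv'
end

section
/- A Young diagram is determined by the multiset of contents of its cells: if λ and μ are Young diagrams whose multisets of cell contents are equal, then λ = μ. (This gives the injectivity of the map λ ↦ ω_λ = Λ_0 − Σ_{i ∈ C(λ)} α_i from partitions to weights of the basic representation of sl_∞.) -/
/-- The content of a cell `(r, c)` (row `r`, column `c`) is `c - r`. -/
def content (x : ℕ × ℕ) : ℤ := (x.2 : ℤ) - (x.1 : ℤ)

/-- `x` is an addable box of the Young diagram `μ`: `x ∉ μ` and `μ ∪ {x}` is again a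
Young diagram. -/
def Addable (μ : YoungDiagram) (x : ℕ × ℕ) : Prop :=
  x ∉ μ ∧ IsLowerSet (↑(insert x μ.cells) : Set (ℕ × ℕ))

/-- `x` is a removable box of the Young diagram `μ`: `x ∈ μ` and `μ ∖ {x}` is again a
Young diagram. -/
def Removable (μ : YoungDiagram) (x : ℕ × ℕ) : Prop :=
  x ∈ μ ∧ IsLowerSet (↑(μ.cells.erase x) : Set (ℕ × ℕ))

/-- `B⁺(μ)`: the set of contents of addable boxes of `μ`. -/
def Bplus (μ : YoungDiagram) : Set ℤ := {i | ∃ x, Addable μ x ∧ content x = i}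

/-- `B⁻(μ)`: the set of contents of removable boxes of `μ`. -/
def Bminus (μ : YoungDiagram) : Set ℤ := {i | ∃ x, Removable μ x ∧ content x = i}

/-- `AddBox l i m` means `m = l ⊞ i`, i.e. `m` is obtained from `l` by adding an addable
box of content `i`. -/
def AddBox (l : YoungDiagram) (i : ℤ) (m : YoungDiagram) : Prop :=
  ∃ x, Addable l x ∧ content x = i ∧ m.cells = insert x l.cells

/-- `RemoveBox l i m` means `m = l ⊟ i`, i.e. `m` is obtained from `l` by removing a
removable box of content `i`. -/
def RemoveBox (l : YoungDiagram) (i : ℤ) (m : YoungDiagram) : Prop :=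
  ∃ x, Removable l x ∧ content x = i ∧ m.cells = l.cells.erase x

/-- The hook length `h_μ(r, c)` of a cell of `μ`. -/
def hookLen (μ : YoungDiagram) (x : ℕ × ℕ) : ℕ :=
  (μ.cells.filter (fun y => (y.1 = x.1 ∧ x.2 ≤ y.2) ∨ (y.2 = x.2 ∧ x.1 ≤ y.1))).card

/-- `d_μ = |μ|! / ∏ hook lengths`, the dimension of the irreducible `ℚS_{|μ|}`-module
indexed by `μ` (hook length formula). -/
def dimPart (μ : YoungDiagram) : ℚ :=
  (Nat.factorial μ.card : ℚ) / ∏ x ∈ μ.cells, (hookLen μ x : ℚ)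

lemma mem_iff_lt_count (μ : YoungDiagram) (r c : ℕ) :
    (r, c) ∈ μ ↔ min r c < (μ.cells.filter (fun x => content x = (c:ℤ) - r)).card := by
  set d : ℤ := (c:ℤ) - r with hd
  set f : ℕ → ℕ × ℕ := fun k => (k + (-d).toNat, k + d.toNat) with hf
  set T : Finset ℕ := (μ.cells.filter (fun x => content x = d)).image (fun x => min x.1 x.2)
    with hT
  have hfix : ∀ x : ℕ × ℕ, content x = d → f (min x.1 x.2) = x := by
    intro x hx
    simp only [content] at hx
    simp only [hf, Prod.ext_iff]
    constructor <;> omega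
  have hcard : T.card = (μ.cells.filter (fun x => content x = d)).card := by
    apply Finset.card_image_of_injOn
    intro x hx y hy hxy
    simp only [Finset.mem_coe, Finset.mem_filter] at hx hy
    dsimp only at hxy
    rw [← hfix x hx.2, ← hfix y hy.2, hxy]
  have hmemT : ∀ k : ℕ, k ∈ T ↔ f k ∈ μ := by
    intro k
    constructor
    · intro hk
      simp only [hT, Finset.mem_image, Finset.mem_filter] at hk
      obtain ⟨x, ⟨hx, hxc⟩, hkx⟩ := hk
      rw [← hkx, hfix x hxc]
      exact (μ.mem_cells x).1 hx
    · intro hk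
      simp only [hT, Finset.mem_image, Finset.mem_filter]
      refine ⟨f k, ⟨(μ.mem_cells (f k)).2 hk, ?_⟩, ?_⟩
      · simp only [content, hf]; push_cast; omega
      · simp only [hf]; omega
  have hdown : ∀ k k' : ℕ, k' ≤ k → k ∈ T → k' ∈ T := by
    intro k k' hle hk
    rw [hmemT] at hk ⊢
    exact μ.isLowerSet (Prod.mk_le_mk.2 ⟨by omega, by omega⟩) hk
  have hiff : ∀ k : ℕ, k ∈ T ↔ k < T.card := by
    intro k
    constructor
    · intro hk
      by_contra hlt
      push_neg at hlt
      have : Finset.range (k+1) ⊆ T := by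
        intro j hj
        exact hdown k j (by simpa using Nat.lt_succ_iff.1 (Finset.mem_range.1 hj)) hk
      have := Finset.card_le_card this
      simp at this; omega
    · intro hk
      by_contra hkT
      have : T ⊆ Finset.range k := by
        intro j hj
        by_contra hjr
        simp only [Finset.mem_range, not_lt] at hjr
        exact hkT (hdown j k hjr hj)
      have := Finset.card_le_card this
      simp at this; omega
  have hrc : f (min r c) = (r, c) := by
    simp only [hf, Prod.ext_iff]; constructor <;> omega
  rw [← hcard, ← hiff, hmemT, hrc]

/-- A Young diagram is determined by the multiset of contents of its cells. -/
theorem eq_of_contents_eq (l m : YoungDiagram)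
    (h : l.cells.val.map content = m.cells.val.map content) : l = m := by
  have hcount : ∀ i : ℤ, ∀ μ : YoungDiagram,
      (μ.cells.filter (fun x => content x = i)).card = (μ.cells.val.map content).count i := by
    intro i μ
    rw [Multiset.count_map]
    show Multiset.card _ = _
    rw [Finset.filter_val]
    congr 1
    exact Multiset.filter_congr (fun x _ => eq_comm)
  ext ⟨r, c⟩
  rw [l.mem_cells, m.mem_cells, mem_iff_lt_count, mem_iff_lt_count, hcount _ l, hcount _ m, h]
end

section
/- For every nonempty Young diagram λ: d_λ = Σ_{j ∈ B⁻(λ)} d_{λ ⊟ j}. (This is the dimension identity corresponding to the branching rule for restriction of irreducible symmetric group modules.) -/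
/-!
Frobenius' form of the hook length formula: for `m` at least the number of rows of `λ` and the
β-numbers `β r = λ_r + m - 1 - r`, `d_λ = n! Δ(β) / ∏ β_r!` with `Δ(β) = ∏_{r < i} (β_r - β_i)`.
It holds row by row, because the hook lengths in row `r` and the differences `β_r - β_i`
(`r < i < m`) are together exactly `1, …, β_r`.

Removing the corner of row `k` lowers `β_k` by one, so
`n d_{λ ⊟ j} / d_λ = β_k ∏_{i ≠ k} (β_k - β_i - 1) / (β_k - β_i)`. This vanishes for rows without
a corner (then `β_{k+1} = β_k - 1`), and summed over all rows it is `∑ β - C(m, 2) = n` by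
Lagrange interpolation.
-/

open Finset

section Polynomial

open Polynomial

theorem two_mul_prod_X_sub_C_coeff_card_sub_two {R ι : Type*} [CommRing R] (s : Finset ι)
    (f : ι → R) (hs : 2 ≤ #s) :
    2 * (∏ i ∈ s, (X - C (f i))).coeff (#s - 2) =
      (∑ i ∈ s, f i) ^ 2 - ∑ i ∈ s, f i ^ 2 := by
  induction s using Finset.cons_induction with
  | empty => simp at hs
  | cons a t ha ih =>
    obtain ⟨n, hn⟩ : ∃ n, #t = n + 1 := ⟨#t - 1, by rw [card_cons] at hs; omega⟩
    rw [prod_cons, card_cons, sum_cons, sum_cons, hn, show n + 1 + 1 - 2 = n by omega, sub_mul,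
      coeff_sub, coeff_C_mul]
    cases n with
    | zero =>
      obtain ⟨b, rfl⟩ := card_eq_one.mp hn
      simp [coeff_X]
      ring
    | succ n =>
      have hpred := prod_X_sub_C_coeff_card_pred t f (by omega)
      rw [hn, Nat.add_sub_cancel] at hpred
      have ih' := ih (by omega)
      rw [hn, show n + 1 + 1 - 2 = n by omega] at ih'
      rw [coeff_X_mul, mul_sub, ih', hpred]
      ring

theorem sum_mul_prod_sub_sub_one_div_prod_sub {F ι : Type*} [Field F] [CharZero F]
    [DecidableEq ι] {s : Finset ι} {v : ι → F} (hv : Set.InjOn v s) :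
    ∑ i ∈ s, v i * (∏ j ∈ s.erase i, (v i - v j - 1)) / ∏ j ∈ s.erase i, (v i - v j) =
      ∑ i ∈ s, v i - ((#s).choose 2 : F) := by
  obtain hs | hs := lt_or_ge #s 2
  · obtain h0 | h1 : #s = 0 ∨ #s = 1 := by omega
    · simp [card_eq_zero.mp h0]
    · obtain ⟨a, rfl⟩ := card_eq_one.mp h1
      simp
  set D := Lagrange.nodal s v
  set N := Lagrange.nodal s (fun i => v i + 1)
  have hsum_succ : ∑ i ∈ s, (v i + 1) = ∑ i ∈ s, v i + #s := by simp [sum_add_distrib]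
  have hD1 : D.coeff (#s - 1) = -∑ i ∈ s, v i := prod_X_sub_C_coeff_card_pred s v (by omega)
  have hN1 : N.coeff (#s - 1) = -(∑ i ∈ s, v i + #s) := by
    rw [← hsum_succ]; exact prod_X_sub_C_coeff_card_pred s _ (by omega)
  have hDN2 : (D - N).coeff (#s - 2) = -((#s - 1) * ∑ i ∈ s, v i + ((#s).choose 2 : F)) := by
    have hD2 : 2 * D.coeff (#s - 2) = _ := two_mul_prod_X_sub_C_coeff_card_sub_two s v hs
    have hN2 : 2 * N.coeff (#s - 2) = _ :=
      two_mul_prod_X_sub_C_coeff_card_sub_two s (fun i => v i + 1) hs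
    have hsq : ∑ i ∈ s, (v i + 1) ^ 2 = ∑ i ∈ s, v i ^ 2 + 2 * ∑ i ∈ s, v i + #s := by
      simp [add_sq, sum_add_distrib, mul_sum]
    rw [hsum_succ, hsq] at hN2
    rw [coeff_sub, Nat.cast_choose_two]
    linear_combination (hD2 - hN2) / 2
  have hDN : (D - N).degree < #s := by
    rw [← Lagrange.degree_nodal (s := s) (v := v)]
    exact degree_sub_lt_left (by simp [D, N, Lagrange.degree_nodal]) Lagrange.nodal_ne_zero
      (by rw [Lagrange.nodal_monic.leadingCoeff, Lagrange.nodal_monic.leadingCoeff])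
  -- The top coefficients of `P` cancel, and `P (v i)` is the `i`-th numerator of the sum.
  set P := X * (D - N) - C (#s : F) * D
  have hPdeg : P.degree < #s := by
    rw [degree_lt_iff_coeff_zero]
    intro k hk
    obtain ⟨k, rfl⟩ : ∃ k', k = k' + 1 := ⟨k - 1, by omega⟩
    rw [coeff_sub, coeff_X_mul, coeff_C_mul]
    obtain hk | hk := eq_or_lt_of_le hk
    · have hDtop : D.coeff (k + 1) = 1 := by
        rw [← hk, ← Lagrange.natDegree_nodal (v := v)]; exact Lagrange.nodal_monic
      rw [coeff_sub, show k = #s - 1 by omega, hD1, hN1, ← show k = #s - 1 by omega, hDtop]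
      ring
    · rw [coeff_eq_zero_of_degree_lt (hDN.trans_le (by exact_mod_cast (by omega : #s ≤ k))),
        coeff_eq_zero_of_natDegree_lt (by rw [Lagrange.natDegree_nodal]; omega)]
      ring
  have hPeval : ∀ i ∈ s, P.eval (v i) = v i * ∏ j ∈ s.erase i, (v i - v j - 1) := by
    intro i hi
    simp only [P, eval_sub, eval_mul, eval_X, eval_C, Lagrange.eval_nodal_at_node hi,
      Lagrange.eval_nodal, D, N, ← mul_prod_erase s _ hi, sub_sub]
    ring
  have hPcoeff : P.coeff (#s - 1) = ∑ i ∈ s, v i - ((#s).choose 2 : F) := by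
    rw [show #s - 1 = #s - 2 + 1 by omega, coeff_sub, coeff_X_mul, coeff_C_mul, hDN2,
      ← show #s - 1 = #s - 2 + 1 by omega, hD1]
    ring
  rw [← hPcoeff, Lagrange.coeff_eq_sum hv hPdeg]
  exact sum_congr rfl fun i hi => by rw [hPeval i hi, mul_div_assoc]

end Polynomial

def vandermondeProd {R : Type*} [CommRing R] (M : ℕ) (x : ℕ → R) : R :=
  ∏ i ∈ range M, ∏ j ∈ Ioo i M, (x i - x j)

theorem vandermondeProd_eq_mul {R : Type*} [CommRing R] {M k : ℕ} (hk : k < M) (x : ℕ → R) :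
    vandermondeProd M x = (-1) ^ k * (∏ j ∈ (range M).erase k, (x k - x j)) *
      ∏ i ∈ (range M).erase k, ∏ j ∈ (Ioo i M).erase k, (x i - x j) := by
  have hrow : ∀ i ∈ (range M).erase k, ∏ j ∈ Ioo i M, (x i - x j) =
      (if i < k then x i - x k else 1) * ∏ j ∈ (Ioo i M).erase k, (x i - x j) := by
    intro i hi
    split_ifs with hik
    · exact (mul_prod_erase _ (fun j => x i - x j) (mem_Ioo.mpr ⟨hik, hk⟩)).symm
    · rw [one_mul, erase_eq_of_notMem (by simp; omega)]
  have hcol : ∏ i ∈ (range M).erase k, (if i < k then x i - x k else 1) =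
      (-1) ^ k * ∏ i ∈ range k, (x k - x i) := by
    rw [← prod_filter, show ((range M).erase k).filter (· < k) = range k by ext; simp; omega]
    simpa only [neg_sub, card_range] using prod_neg (s := range k) (fun i => x k - x i)
  have hsplit : ∏ j ∈ (range M).erase k, (x k - x j) =
      (∏ j ∈ range k, (x k - x j)) * ∏ j ∈ Ioo k M, (x k - x j) := by
    rw [show (range M).erase k = range k ∪ Ioo k M by ext; simp; omega,
      prod_union (disjoint_left.mpr fun _ => by simp; omega)]
  rw [vandermondeProd, ← mul_prod_erase _ _ (mem_range.mpr hk), prod_congr rfl hrow,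
    prod_mul_distrib, hcol, hsplit]
  ring

theorem vandermondeProd_update_mul {R : Type*} [CommRing R] {M k : ℕ} (hk : k < M)
    (x : ℕ → R) (a : R) :
    vandermondeProd M (Function.update x k a) * ∏ j ∈ (range M).erase k, (x k - x j) =
      vandermondeProd M x * ∏ j ∈ (range M).erase k, (a - x j) := by
  have hne : ∀ {j} {s : Finset ℕ}, j ∈ s.erase k → Function.update x k a j = x j :=
    fun hj => Function.update_of_ne (ne_of_mem_erase hj) _ _
  rw [vandermondeProd_eq_mul hk, vandermondeProd_eq_mul hk, Function.update_self,
    prod_congr rfl fun j hj => by rw [hne hj],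
    prod_congr rfl fun i hi => prod_congr rfl fun j hj => by rw [hne hi, hne hj]]
  ring

theorem prod_mul_prod_eq_factorial {ι κ : Type*} {s : Finset ι} {t : Finset κ} {u : ι → ℕ}
    {v : κ → ℕ} {n : ℕ} (hu : Set.InjOn u s) (hv : Set.InjOn v t)
    (hus : ∀ i ∈ s, u i ∈ Icc 1 n) (hvt : ∀ j ∈ t, v j ∈ Icc 1 n)
    (huv : ∀ i ∈ s, ∀ j ∈ t, u i ≠ v j) (hcard : #s + #t = n) :
    (∏ i ∈ s, u i) * ∏ j ∈ t, v j = n.factorial := by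
  have hdisj : Disjoint (s.image u) (t.image v) := by
    simp only [disjoint_left, mem_image]
    rintro _ ⟨i, hi, rfl⟩ ⟨j, hj, hij⟩
    exact huv i hi j hj hij.symm
  have hcover : s.image u ∪ t.image v = Icc 1 n := by
    refine eq_of_subset_of_card_le (union_subset ?_ ?_) ?_
    · simpa [image_subset_iff] using hus
    · simpa [image_subset_iff] using hvt
    · rw [card_union_of_disjoint hdisj, card_image_of_injOn hu, card_image_of_injOn hv,
        Nat.card_Icc, hcard, Nat.add_sub_cancel]
  calc (∏ i ∈ s, u i) * ∏ j ∈ t, v j = ∏ k ∈ s.image u ∪ t.image v, k := by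
        rw [prod_union hdisj, prod_image hu, prod_image hv]
    _ = n.factorial := by rw [hcover, ← Ico_add_one_right_eq_Icc, prod_Ico_id_eq_factorial]

theorem prod_factorial_update_pred_mul {s : Finset ℕ} {f : ℕ → ℕ} {k : ℕ} (hk : k ∈ s)
    (hf : 0 < f k) :
    (∏ r ∈ s, (Function.update f k (f k - 1) r).factorial) * f k =
      ∏ r ∈ s, (f r).factorial := by
  rw [← mul_prod_erase _ _ hk, ← mul_prod_erase _ _ hk, Function.update_self,
    prod_congr rfl fun r hr => by rw [Function.update_of_ne (ne_of_mem_erase hr)],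
    ← Nat.mul_factorial_pred hf.ne']
  ring

namespace YoungDiagram

variable {μ : YoungDiagram}

theorem lt_colLen_zero_of_mem {r c : ℕ} (h : (r, c) ∈ μ) : r < μ.colLen 0 :=
  mem_iff_lt_colLen.mp (μ.up_left_mem le_rfl (Nat.zero_le c) h)

theorem colLen_le_of_le {ν : YoungDiagram} (h : ν ≤ μ) (j : ℕ) :
    ν.colLen j ≤ μ.colLen j :=
  not_lt.mp fun hlt => (mem_iff_lt_colLen.mp
    (h (mem_iff_lt_colLen.mpr hlt) : (μ.colLen j, j) ∈ μ)).false

theorem prod_cells_eq_prod_rows {M : ℕ} (hM : μ.colLen 0 ≤ M) {α : Type*} [CommMonoid α]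
    (f : ℕ × ℕ → α) :
    ∏ x ∈ μ.cells, f x = ∏ r ∈ range M, ∏ c ∈ range (μ.rowLen r), f (r, c) := by
  rw [← prod_fiberwise_of_maps_to (g := Prod.fst) (t := range M)
    fun x hx => mem_range.mpr ((lt_colLen_zero_of_mem ((μ.mem_cells x).mp hx)).trans_le hM)]
  refine prod_congr rfl fun r _ => ?_
  rw [show μ.cells.filter (·.1 = r) = μ.row r from rfl, row_eq_prod,
    prod_product, prod_singleton]

theorem card_eq_sum_rowLen {M : ℕ} (hM : μ.colLen 0 ≤ M) :
    μ.card = ∑ r ∈ range M, μ.rowLen r := by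
  rw [YoungDiagram.card, card_eq_sum_card_fiberwise (f := Prod.fst) (t := range M)
    fun x hx => mem_range.mpr ((lt_colLen_zero_of_mem ((μ.mem_cells x).mp hx)).trans_le hM)]
  exact sum_congr rfl fun r _ => (μ.rowLen_eq_card).symm

end YoungDiagram

section Hooks

open YoungDiagram

variable {μ : YoungDiagram}

theorem hookLen_eq {r c : ℕ} (h : (r, c) ∈ μ) :
    hookLen μ (r, c) = μ.rowLen r - c + (μ.colLen c - r) - 1 := by
  have harm : μ.cells.filter (fun y => y.1 = r ∧ c ≤ y.2) = {r} ×ˢ Ico c (μ.rowLen r) := by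
    ext ⟨a, b⟩
    simp only [mem_filter, mem_cells, mem_product, mem_singleton, mem_Ico,
      mem_iff_lt_rowLen]
    grind
  have hleg : μ.cells.filter (fun y => y.2 = c ∧ r ≤ y.1) = Ico r (μ.colLen c) ×ˢ {c} := by
    ext ⟨a, b⟩
    simp only [mem_filter, mem_cells, mem_product, mem_singleton, mem_Ico,
      mem_iff_lt_colLen]
    grind
  have hc := mem_iff_lt_rowLen.mp h
  have hr := mem_iff_lt_colLen.mp h
  have hcorner : ({r} ×ˢ Ico c (μ.rowLen r)) ∩ (Ico r (μ.colLen c) ×ˢ {c}) = {(r, c)} := by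
    ext ⟨a, b⟩
    simp only [mem_inter, mem_product, mem_singleton, mem_Ico, Prod.mk.injEq]
    omega
  have := card_union_add_card_inter ({r} ×ˢ Ico c (μ.rowLen r)) (Ico r (μ.colLen c) ×ˢ {c})
  rw [hcorner, card_singleton, card_product, card_product] at this
  rw [hookLen, filter_or, harm, hleg]
  simp only [card_singleton, Nat.card_Ico, one_mul, mul_one] at this
  omega

-- The β-numbers of `μ` padded to `M ≥ μ.colLen 0` rows.
def beta (μ : YoungDiagram) (M r : ℕ) : ℕ := μ.rowLen r + (M - 1 - r)

theorem beta_lt_beta {M i j : ℕ} (hij : i < j) (hj : j < M) : beta μ M j < beta μ M i := by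
  have := μ.rowLen_anti i j hij.le
  unfold beta
  omega

theorem beta_cast_injOn (M : ℕ) : Set.InjOn (fun r => (beta μ M r : ℚ)) (range M) :=
  Nat.cast_injective.comp_injOn (StrictAntiOn.injOn fun _ _ _ hj hij =>
    beta_lt_beta hij (mem_range.mp hj))

theorem sum_beta {M : ℕ} (hM : μ.colLen 0 ≤ M) :
    ∑ r ∈ range M, beta μ M r = μ.card + M.choose 2 := by
  simp only [beta, sum_add_distrib, card_eq_sum_rowLen hM]
  rw [sum_range_reflect (fun r => r) M, sum_range_id, Nat.choose_two_right]

theorem prod_hookLen_row_mul_prod_beta_sub {M r : ℕ} (hM : μ.colLen 0 ≤ M) (hr : r < M) :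
    (∏ c ∈ range (μ.rowLen r), hookLen μ (r, c)) *
      ∏ i ∈ Ioo r M, (beta μ M r - beta μ M i) = (beta μ M r).factorial := by
  have hhook : ∀ c ∈ range (μ.rowLen r),
      hookLen μ (r, c) = μ.rowLen r - c + (μ.colLen c - r) - 1 ∧ r < μ.colLen c ∧
        μ.colLen c ≤ M := fun c hc =>
    have h := mem_iff_lt_rowLen.mpr (mem_range.mp hc)
    ⟨hookLen_eq h, mem_iff_lt_colLen.mp h, (μ.colLen_anti 0 c c.zero_le).trans hM⟩
  have hbeta : ∀ i ∈ Ioo r M, beta μ M i < beta μ M r := fun i hi =>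
    beta_lt_beta (mem_Ioo.mp hi).1 (mem_Ioo.mp hi).2
  apply prod_mul_prod_eq_factorial
  · refine StrictAntiOn.injOn fun c₁ h₁ c₂ h₂ hlt => ?_
    have := μ.colLen_anti c₁ c₂ hlt.le
    have := hhook c₁ h₁
    have := hhook c₂ h₂
    simp only [coe_range, Set.mem_Iio] at h₂
    omega
  · refine StrictMonoOn.injOn fun i₁ h₁ i₂ h₂ hlt => ?_
    have := hbeta i₁ h₁
    have := beta_lt_beta (μ := μ) hlt (mem_Ioo.mp h₂).2
    omega
  · intro c hc
    have := hhook c hc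
    simp only [mem_range] at hc
    simp only [mem_Icc, beta]
    omega
  · intro i hi
    have := hbeta i hi
    simp only [mem_Icc]
    omega
  · -- `hookLen μ (r, c) = β_r - β_i` would mean `μ.colLen c - 1 - i = c - μ.rowLen i`, but the
    -- two sides have opposite signs whether or not `(i, c) ∈ μ`
    intro c hc i hi
    have := hhook c hc
    have := μ.rowLen_anti r i (mem_Ioo.mp hi).1.le
    simp only [mem_range] at hc
    simp only [mem_Ioo] at hi
    by_cases hic : (i, c) ∈ μ
    · have := mem_iff_lt_rowLen.mp hic
      have := mem_iff_lt_colLen.mp hic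
      simp only [beta]
      omega
    · have := not_lt.mp (mt mem_iff_lt_rowLen.mpr hic)
      have := not_lt.mp (mt mem_iff_lt_colLen.mpr hic)
      simp only [beta]
      omega
  · simp only [card_range, Nat.card_Ioo, beta]
    omega

theorem prod_hookLen_mul_vandermondeProd {M : ℕ} (hM : μ.colLen 0 ≤ M) :
    (∏ x ∈ μ.cells, (hookLen μ x : ℚ)) * vandermondeProd M (fun r => (beta μ M r : ℚ)) =
      ∏ r ∈ range M, ((beta μ M r).factorial : ℚ) := by
  rw [prod_cells_eq_prod_rows hM, vandermondeProd, ← prod_mul_distrib]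
  refine prod_congr rfl fun r hr => ?_
  have hsub : ∏ i ∈ Ioo r M, ((beta μ M r : ℚ) - beta μ M i) =
      ((∏ i ∈ Ioo r M, (beta μ M r - beta μ M i) : ℕ) : ℚ) := by
    rw [Nat.cast_prod]
    exact prod_congr rfl fun i hi =>
      (Nat.cast_sub (beta_lt_beta (mem_Ioo.mp hi).1 (mem_Ioo.mp hi).2).le).symm
  rw [hsub, ← prod_hookLen_row_mul_prod_beta_sub hM (mem_range.mp hr)]
  simp only [Nat.cast_mul, Nat.cast_prod]

theorem dimPart_eq {M : ℕ} (hM : μ.colLen 0 ≤ M) :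
    dimPart μ = μ.card.factorial * vandermondeProd M (fun r => (beta μ M r : ℚ)) /
      ∏ r ∈ range M, ((beta μ M r).factorial : ℚ) := by
  have h := prod_hookLen_mul_vandermondeProd hM
  have hV : vandermondeProd M (fun r => (beta μ M r : ℚ)) ≠ 0 :=
    right_ne_zero_of_mul (h ▸ prod_ne_zero_iff.mpr fun r _ => by positivity)
  rw [dimPart, ← h, mul_div_mul_right _ _ hV]

theorem removable_iff {a c : ℕ} :
    Removable μ (a, c) ↔ c + 1 = μ.rowLen a ∧ μ.rowLen (a + 1) < μ.rowLen a := by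
  simp only [Removable, coe_erase, mem_iff_lt_rowLen]
  constructor
  · rintro ⟨hmem, hlow⟩
    have hmax : ∀ y ∈ μ, (a, c) ≤ y → y = (a, c) := fun y hy hle =>
      by_contra fun hne => (hlow hle ⟨hy, hne⟩).2 rfl
    have hright := mt (hmax (a, c + 1)) (by simp)
    have hdown := mt (hmax (a + 1, c)) (by simp)
    simp only [mem_iff_lt_rowLen] at hright hdown
    omega
  · rintro ⟨hc, hlt⟩
    refine ⟨by omega, μ.isLowerSet.erase fun ⟨p, q⟩ hy hle => ?_⟩
    obtain ⟨hap, hcq⟩ := Prod.mk_le_mk.mp hle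
    have hq : q < μ.rowLen p := mem_iff_lt_rowLen.mp hy
    have hp : p = a := by
      by_contra hne
      have := μ.rowLen_anti (a + 1) p (by omega)
      omega
    subst hp
    exact Prod.ext rfl (by omega)

theorem Removable.eq_of_content_eq {a c a' c' : ℕ} (h : Removable μ (a, c))
    (h' : Removable μ (a', c')) (he : content (a, c) = content (a', c')) : (a, c) = (a', c') := by
  rw [removable_iff] at h h'
  simp only [content, Prod.mk.injEq] at he ⊢
  rcases lt_trichotomy a a' with hlt | rfl | hlt
  · have := μ.rowLen_anti _ _ hlt.le
    omega
  · omega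
  · have := μ.rowLen_anti _ _ hlt.le
    omega

theorem rowLen_eq_update_of_cells_eq_erase {ν : YoungDiagram} {k c : ℕ}
    (hc : c + 1 = μ.rowLen k) (hν : ν.cells = μ.cells.erase (k, c)) :
    ν.rowLen = Function.update μ.rowLen k c := by
  funext i
  refine eq_of_forall_lt_iff fun j => ?_
  rw [← mem_iff_lt_rowLen, ← mem_cells, hν, mem_erase, mem_cells, mem_iff_lt_rowLen]
  by_cases hik : i = k
  · subst hik
    simp only [ne_eq, Prod.mk.injEq, true_and, Function.update_self]
    omega
  · simp [hik]

theorem beta_eq_update_of_cells_eq_erase {ν : YoungDiagram} {M k c : ℕ}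
    (hc : c + 1 = μ.rowLen k) (hν : ν.cells = μ.cells.erase (k, c)) :
    beta ν M = Function.update (beta μ M) k (beta μ M k - 1) := by
  funext r
  simp only [beta, rowLen_eq_update_of_cells_eq_erase hc hν, Function.update_apply]
  split_ifs <;> omega

theorem dimPart_mul_card_of_cells_eq_erase {ν : YoungDiagram} {M k c : ℕ}
    (hM : μ.colLen 0 ≤ M) (hrem : Removable μ (k, c)) (hν : ν.cells = μ.cells.erase (k, c)) :
    dimPart ν * μ.card = dimPart μ * ((beta μ M k : ℚ) *
      (∏ j ∈ (range M).erase k, ((beta μ M k : ℚ) - beta μ M j - 1)) /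
        ∏ j ∈ (range M).erase k, ((beta μ M k : ℚ) - beta μ M j)) := by
  have hc := (removable_iff.mp hrem).1
  have hk : k < M := (lt_colLen_zero_of_mem hrem.1).trans_le hM
  have hxk : 0 < beta μ M k := by unfold beta; omega
  have hβ := beta_eq_update_of_cells_eq_erase (M := M) hc hν
  have hx : (fun r => (beta ν M r : ℚ)) =
      Function.update (fun r => (beta μ M r : ℚ)) k (beta μ M k - 1) := by
    funext r
    rw [hβ, Function.update_apply, Function.update_apply]
    split_ifs
    · push_cast [Nat.cast_sub hxk]; rfl
    · rfl
  have hνM : ν.colLen 0 ≤ M := (colLen_le_of_le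
    (cells_subset_iff.mp (hν ▸ erase_subset _ _)) 0).trans hM
  have hcard : ν.card = μ.card - 1 := by
    rw [YoungDiagram.card, hν, card_erase_of_mem ((μ.mem_cells _).mpr hrem.1)]
  have hnpos : 0 < μ.card := card_pos.mpr ⟨_, (μ.mem_cells _).mpr hrem.1⟩
  have hW : ∏ j ∈ (range M).erase k, ((beta μ M k : ℚ) - beta μ M j) ≠ 0 :=
    prod_ne_zero_iff.mpr fun j hj => sub_ne_zero.mpr fun h => ne_of_mem_erase hj
      (beta_cast_injOn M (mem_range.mpr hk) (mem_of_mem_erase hj) h).symm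
  have hV := vandermondeProd_update_mul hk (fun r => (beta μ M r : ℚ)) (beta μ M k - 1)
  have hF : (∏ r ∈ range M, ((beta ν M r).factorial : ℚ)) * beta μ M k =
      ∏ r ∈ range M, ((beta μ M r).factorial : ℚ) := by
    rw [hβ]
    exact_mod_cast prod_factorial_update_pred_mul (mem_range.mpr hk) hxk
  rw [dimPart_eq hνM, dimPart_eq hM, hx, hcard, ← hF, ← Nat.mul_factorial_pred hnpos.ne']
  have hF0 : ∏ r ∈ range M, ((beta ν M r).factorial : ℚ) ≠ 0 :=
    prod_ne_zero_iff.mpr fun r _ => by positivity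
  have hb : (beta μ M k : ℚ) ≠ 0 := by positivity
  rw [prod_congr rfl fun j _ => sub_right_comm (beta μ M k : ℚ) 1 (beta μ M j)] at hV
  push_cast
  field_simp
  exact hV

def corners (μ : YoungDiagram) : Finset ℕ :=
  (range (μ.colLen 0)).filter fun k => μ.rowLen (k + 1) < μ.rowLen k

theorem corners_subset : corners μ ⊆ range (μ.colLen 0) :=
  filter_subset _ _

theorem removable_iff_mem_corners {a c : ℕ} :
    Removable μ (a, c) ↔ a ∈ corners μ ∧ c = μ.rowLen a - 1 := by
  rw [removable_iff, corners, mem_filter, mem_range, ← mem_iff_lt_colLen,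
    mem_iff_lt_rowLen]
  omega

theorem sum_eq_sum_corners {α : Type*} [AddCommMonoid α] {S : Finset ℤ}
    (hS : ∀ i, i ∈ S ↔ i ∈ Bminus μ) (g : ℤ → α) :
    ∑ j ∈ S, g j = ∑ k ∈ corners μ, g (content (k, μ.rowLen k - 1)) := by
  have hrem : ∀ k ∈ corners μ, Removable μ (k, μ.rowLen k - 1) := fun k hk =>
    removable_iff_mem_corners.mpr ⟨hk, rfl⟩
  symm
  refine sum_nbij (fun k => content (k, μ.rowLen k - 1))
    (fun k hk => (hS _).mpr ⟨_, hrem k hk, rfl⟩)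
    (fun k hk k' hk' he => congrArg Prod.fst ((hrem k hk).eq_of_content_eq (hrem k' hk') he))
    (fun j hj => ?_) fun _ _ => rfl
  obtain ⟨⟨a, c⟩, hac, rfl⟩ := (hS j).mp hj
  obtain ⟨ha, rfl⟩ := removable_iff_mem_corners.mp hac
  exact ⟨a, ha, rfl⟩

theorem prod_beta_sub_sub_one_eq_zero {k : ℕ} (hk : k < μ.colLen 0) (hk' : k ∉ corners μ) :
    ∏ j ∈ (range (μ.colLen 0)).erase k,
      ((beta μ (μ.colLen 0) k : ℚ) - beta μ (μ.colLen 0) j - 1) = 0 := by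
  have hrow : μ.rowLen (k + 1) = μ.rowLen k := by
    have := μ.rowLen_anti k (k + 1) k.le_succ
    simp only [corners, mem_filter, mem_range] at hk'
    omega
  have hk1 : k + 1 < μ.colLen 0 := by
    rw [← mem_iff_lt_colLen, mem_iff_lt_rowLen, hrow,
      ← mem_iff_lt_rowLen, mem_iff_lt_colLen]
    exact hk
  refine prod_eq_zero (mem_erase.mpr ⟨k.succ_ne_self, mem_range.mpr hk1⟩) ?_
  have : beta μ (μ.colLen 0) k = beta μ (μ.colLen 0) (k + 1) + 1 := by
    unfold beta
    omega
  rw [this]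
  push_cast
  ring

end Hooks

/-- Branching rule for restriction: for a nonempty Young diagram `λ`,
`d_λ = Σ_{j ∈ B⁻(λ)} d_{λ ⊟ j}`. -/
theorem dim_eq_sum_dim_remove (l : YoungDiagram) (hl : 0 < l.card)
    (S : Finset ℤ) (hS : ∀ i : ℤ, i ∈ S ↔ i ∈ Bminus l)
    (D : ℤ → YoungDiagram) (hD : ∀ j ∈ S, RemoveBox l j (D j)) :
    dimPart l = ∑ j ∈ S, dimPart (D j) := by
  have hn : (l.card : ℚ) ≠ 0 := by exact_mod_cast hl.ne'
  set M := l.colLen 0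
  set x : ℕ → ℚ := fun r => (beta l M r : ℚ)
  have hcorner : ∀ k ∈ corners l, dimPart (D (content (k, l.rowLen k - 1))) =
      dimPart l / l.card * (x k * (∏ j ∈ (range M).erase k, (x k - x j - 1)) /
        ∏ j ∈ (range M).erase k, (x k - x j)) := by
    intro k hk
    have hrem := removable_iff_mem_corners.mpr ⟨hk, rfl⟩
    obtain ⟨⟨a, c⟩, hac, hcont, hcells⟩ := hD _ ((hS _).mpr ⟨_, hrem, rfl⟩)
    obtain ⟨rfl, rfl⟩ := Prod.mk.inj (hac.eq_of_content_eq hrem hcont)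
    rw [div_mul_eq_mul_div, eq_div_iff hn]
    exact dimPart_mul_card_of_cells_eq_erase le_rfl hac hcells
  rw [sum_eq_sum_corners hS, sum_congr rfl hcorner, ← mul_sum,
    sum_subset corners_subset fun k hk hk' => by
      rw [prod_beta_sub_sub_one_eq_zero (mem_range.mp hk) hk', mul_zero, zero_div],
    sum_mul_prod_sub_sub_one_div_prod_sub (beta_cast_injOn M), card_range, ← Nat.cast_sum,
    sum_beta (M := M) le_rfl, Nat.cast_add, add_sub_cancel_right,
    div_mul_cancel₀ _ hn]
end

section
/- Let λ be a Young diagram and let i, j ∈ B⁺(λ) with |i − j| > 1 (so that λ ⊞ i ⊞ j is defined and equals λ ⊞ j ⊞ i). Then (1 − 1/(i−j)²) · ((|λ|+1)/(|λ|+2)) · (d_λ · d_{λ ⊞ i ⊞ j}) / (d_{λ ⊞ i} · d_{λ ⊞ j}) = 1. -/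
/-!
Adding an addable box `a` to a diagram raises by one exactly the hook lengths of the cells
whose hook contains `a` (those to its left in its row and above it in its column), and the
new box has hook length one. If `a` lies strictly north-east of another addable box `b`,
the only cell whose hook contains both is the corner `(a.1, b.2)`, of hook length
`d = c(a) - c(b) - 1`. Hence `h_λ h_{λ⊞i⊞j} = h_{λ⊞i} h_{λ⊞j}` cell by cell except at the
corner, where the two sides are `d (d + 2)` and `(d + 1)²`; this gives the factor
`1 - 1/(i - j)²`, and the factorials give `(|λ| + 2)/(|λ| + 1)`.
-/

open Finset

variable {l μ ν mi mj m : YoungDiagram} {a b x : ℕ × ℕ}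

theorem mem_iff_of_cells_eq_insert (hν : ν.cells = insert a μ.cells) :
    x ∈ ν ↔ x = a ∨ x ∈ μ := by
  rw [← YoungDiagram.mem_cells, hν, mem_insert, YoungDiagram.mem_cells]

theorem notMem_of_cells_eq_insert (hν : ν.cells = insert a μ.cells) (hxa : x ≠ a)
    (hx : x ∉ μ) : x ∉ ν := by
  rw [mem_iff_of_cells_eq_insert hν]
  exact fun h => h.elim hxa hx

theorem card_of_cells_eq_insert (ha : a ∉ μ) (hν : ν.cells = insert a μ.cells) :
    ν.card = μ.card + 1 := by
  rw [YoungDiagram.card, hν, card_insert_of_notMem ha]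

theorem addable_iff : Addable μ x ↔ x ∉ μ ∧ ∀ z < x, z ∈ μ := by
  refine and_congr_right fun _ => ⟨fun h z hz => ?_, fun h w z hzw hw => ?_⟩
  · have hz' : z ∈ (↑(insert x μ.cells) : Set (ℕ × ℕ)) := h hz.le (by simp)
    simpa [hz.ne] using hz'
  · simp only [coe_insert, Set.mem_insert_iff, mem_coe, YoungDiagram.mem_cells] at hw ⊢
    rcases hw with rfl | hw
    · exact hzw.eq_or_lt.imp id (h z)
    · exact Or.inr (μ.isLowerSet hzw hw)

theorem addable_of_cells_eq_insert (ha : a ∉ μ) (hν : ν.cells = insert a μ.cells) :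
    Addable μ a :=
  ⟨ha, hν ▸ ν.isLowerSet⟩

theorem Addable.mem_of_lt (ha : Addable μ a) (h : x < a) : x ∈ μ :=
  (addable_iff.1 ha).2 x h

theorem Addable.notMem_of_le (ha : Addable μ a) (h : a ≤ x) : x ∉ μ :=
  fun hx => ha.1 (μ.isLowerSet h hx)

theorem Addable.not_le (ha : Addable μ a) (hb : Addable μ b) (hab : a ≠ b) : ¬a ≤ b :=
  fun h => ha.1 (hb.mem_of_lt (h.lt_of_ne hab))

theorem Addable.lt_lt_or_lt_lt (ha : Addable μ a) (hb : Addable μ b) (hab : a ≠ b) :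
    (a.1 < b.1 ∧ b.2 < a.2) ∨ (b.1 < a.1 ∧ a.2 < b.2) := by
  have hnab := ha.not_le hb hab
  have hnba := hb.not_le ha hab.symm
  rw [Prod.le_def] at hnab hnba
  omega

theorem Addable.eq_of_content_eq (ha : Addable μ a) (hb : Addable μ b)
    (h : content a = content b) : a = b := by
  by_contra hab
  simp only [content] at h
  rcases ha.lt_lt_or_lt_lt hb hab with h' | h' <;> omega

theorem Addable.not_lt_of_addable_insert (ha : Addable μ a) (hν : ν.cells = insert a μ.cells)
    (hb : Addable ν b) (hgap : 1 < |content a - content b|) : ¬a < b := by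
  intro hab
  -- a cell of `ν` immediately above or to the left of `b` lies weakly south-east of `a`
  obtain ⟨p, hap, hpb, hp⟩ : ∃ p, a ≤ p ∧ p < b ∧ |content p - content b| = 1 := by
    simp only [content]
    rcases Prod.lt_iff.1 hab with ⟨h1, h2⟩ | ⟨h1, h2⟩
    · refine ⟨(b.1 - 1, b.2), ?_, ?_, ?_⟩
      · exact Prod.mk_le_mk.2 ⟨by omega, h2⟩
      · exact Prod.lt_iff.2 (Or.inl ⟨by simp; omega, le_rfl⟩)
      · rw [abs_eq (by norm_num)]; omega
    · refine ⟨(b.1, b.2 - 1), ?_, ?_, ?_⟩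
      · exact Prod.mk_le_mk.2 ⟨h1, by omega⟩
      · exact Prod.lt_iff.2 (Or.inr ⟨le_rfl, by simp; omega⟩)
      · rw [abs_eq (by norm_num)]; omega
  rcases (mem_iff_of_cells_eq_insert hν).1 (hb.mem_of_lt hpb) with rfl | hp'
  · exact hgap.ne' hp
  · exact ha.notMem_of_le hap hp'

theorem Addable.of_addable_insert (ha : Addable μ a) (hν : ν.cells = insert a μ.cells)
    (hb : Addable ν b) (hgap : 1 < |content a - content b|) : Addable μ b := by
  have hν' := fun x => mem_iff_of_cells_eq_insert (x := x) hν
  refine addable_iff.2 ⟨fun h => hb.1 ((hν' b).2 (Or.inr h)), fun z hz => ?_⟩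
  rcases (hν' z).1 (hb.mem_of_lt hz) with rfl | h
  · exact absurd hz (ha.not_lt_of_addable_insert hν hb hgap)
  · exact h

/-- `InHook x y`: the cell `y` lies in the hook of the cell `x`. -/
def InHook (x y : ℕ × ℕ) : Prop :=
  (y.1 = x.1 ∧ x.2 ≤ y.2) ∨ (y.2 = x.2 ∧ x.1 ≤ y.1)

instance (x : ℕ × ℕ) : DecidablePred (InHook x) := fun _ => by
  unfold InHook; infer_instance

theorem inHook_self (x : ℕ × ℕ) : InHook x x :=
  Or.inl ⟨rfl, le_rfl⟩

theorem InHook.le {y : ℕ × ℕ} (h : InHook x y) : x ≤ y := by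
  rcases h with ⟨h1, h2⟩ | ⟨h1, h2⟩
  · exact Prod.mk_le_mk.2 ⟨h1.ge, h2⟩
  · exact Prod.mk_le_mk.2 ⟨h2, h1.ge⟩

theorem hookLen_eq_card_filter : hookLen μ x = #(μ.cells.filter (InHook x)) := rfl

theorem hookLen_pos (hx : x ∈ μ) : 0 < hookLen μ x :=
  card_pos.2 ⟨x, mem_filter.2 ⟨hx, inHook_self x⟩⟩

theorem Addable.hookLen_eq_zero (ha : Addable μ a) : hookLen μ a = 0 := by
  rw [hookLen_eq_card_filter, card_eq_zero, filter_eq_empty_iff]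
  exact fun y hy hay => ha.notMem_of_le hay.le hy

theorem hookLen_of_cells_eq_insert (ha : a ∉ μ) (hν : ν.cells = insert a μ.cells)
    (x : ℕ × ℕ) : hookLen ν x = hookLen μ x + if InHook x a then 1 else 0 := by
  rw [hookLen_eq_card_filter, hν, filter_insert]
  split_ifs
  · exact card_insert_of_notMem fun h => ha (mem_filter.1 h).1
  · rfl

theorem Addable.hookLen_insert_self (ha : Addable μ a) (hν : ν.cells = insert a μ.cells) :
    hookLen ν a = 1 := by
  rw [hookLen_of_cells_eq_insert ha.1 hν, ha.hookLen_eq_zero, if_pos (inHook_self a)]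

theorem Addable.hookLen_corner (ha : Addable μ a) (hb : Addable μ b) (h1 : a.1 < b.1)
    (h2 : b.2 < a.2) : (hookLen μ (a.1, b.2) : ℤ) + 1 = content a - content b := by
  have hhook : μ.cells.filter (InHook (a.1, b.2)) =
      {a.1} ×ˢ Ico b.2 a.2 ∪ Ioo a.1 b.1 ×ˢ {b.2} := by
    ext y
    simp only [mem_filter, YoungDiagram.mem_cells, InHook, mem_union, mem_product,
      mem_singleton, mem_Ico, mem_Ioo]
    constructor
    · rintro ⟨hy, hyhook⟩
      have hay : ¬a ≤ y := fun h => ha.notMem_of_le h hy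
      have hby : ¬b ≤ y := fun h => hb.notMem_of_le h hy
      rw [Prod.le_def] at hay hby
      omega
    · intro hy
      refine ⟨?_, by omega⟩
      rcases hy with ⟨hy1, hy2⟩ | ⟨hy1, hy2⟩
      · exact ha.mem_of_lt (Prod.lt_iff.2 (Or.inr ⟨by omega, by omega⟩))
      · exact hb.mem_of_lt (Prod.lt_iff.2 (Or.inl ⟨by omega, by omega⟩))
  have hdisj : Disjoint ({a.1} ×ˢ Ico b.2 a.2) (Ioo a.1 b.1 ×ˢ {b.2}) := by
    simp only [disjoint_left, mem_product, mem_singleton, mem_Ioo]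
    omega
  rw [hookLen_eq_card_filter, hhook, card_union_of_disjoint hdisj, card_product, card_product,
    card_singleton, card_singleton, Nat.card_Ico, Nat.card_Ioo, content, content]
  omega

theorem hookLen_mul_hookLen_of_ne_corner (ha : a ∉ l) (hb : b ∉ l) (h1 : a.1 < b.1)
    (h2 : b.2 < a.2) (hmi : mi.cells = insert a l.cells) (hmj : mj.cells = insert b l.cells)
    (hm : m.cells = insert b mi.cells) {y : ℕ × ℕ} (hy : y ≠ (a.1, b.2)) :
    hookLen l y * hookLen m y = hookLen mi y * hookLen mj y := by
  have hbmi : b ∉ mi := notMem_of_cells_eq_insert hmi (by rintro rfl; exact h1.false) hb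
  have hyab : ¬(InHook y a ∧ InHook y b) := by
    rw [Ne, Prod.ext_iff] at hy
    simp only [InHook]
    omega
  rw [hookLen_of_cells_eq_insert hbmi hm, hookLen_of_cells_eq_insert ha hmi,
    hookLen_of_cells_eq_insert hb hmj]
  split_ifs with hya hyb
  · exact absurd ⟨hya, hyb⟩ hyab
  all_goals ring

def hookProd (μ : YoungDiagram) : ℕ :=
  ∏ x ∈ μ.cells, hookLen μ x

theorem dimPart_eq_s14 (μ : YoungDiagram) : dimPart μ = μ.card.factorial / hookProd μ := by
  simp [dimPart, hookProd]

theorem hookProd_ne_zero (μ : YoungDiagram) : hookProd μ ≠ 0 :=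
  prod_ne_zero_iff.2 fun _ hx => (hookLen_pos hx).ne'

theorem Addable.hookProd_insert (ha : Addable μ a) (hν : ν.cells = insert a μ.cells) :
    hookProd ν = ∏ x ∈ μ.cells, hookLen ν x := by
  rw [hookProd, hν, prod_insert ha.1, ha.hookLen_insert_self hν, one_mul]

theorem hookProd_mul_hookProd_of_lt (ha : Addable l a) (hb : Addable l b) (h1 : a.1 < b.1)
    (h2 : b.2 < a.2) (hmi : mi.cells = insert a l.cells) (hmj : mj.cells = insert b l.cells)
    (hm : m.cells = insert b mi.cells) :
    (hookProd mi * hookProd mj : ℤ) * ((content a - content b) ^ 2 - 1) =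
      hookProd l * hookProd m * (content a - content b) ^ 2 := by
  have hbmi : b ∉ mi := notMem_of_cells_eq_insert hmi (by rintro rfl; exact h1.false) hb.1
  have hc : (a.1, b.2) ∈ l.cells := ha.mem_of_lt (Prod.lt_iff.2 (Or.inr ⟨le_rfl, h2⟩))
  have hca : InHook (a.1, b.2) a := Or.inl ⟨rfl, h2.le⟩
  have hcb : InHook (a.1, b.2) b := Or.inr ⟨rfl, h1.le⟩
  set d := hookLen l (a.1, b.2)
  have hdmi : hookLen mi (a.1, b.2) = d + 1 := by
    rw [hookLen_of_cells_eq_insert ha.1 hmi, if_pos hca]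
  have hdmj : hookLen mj (a.1, b.2) = d + 1 := by
    rw [hookLen_of_cells_eq_insert hb.1 hmj, if_pos hcb]
  have hdm : hookLen m (a.1, b.2) = d + 2 := by
    rw [hookLen_of_cells_eq_insert hbmi hm, hdmi, if_pos hcb]
  have hma : hookLen m a = 1 := by
    rw [hookLen_of_cells_eq_insert hbmi hm, ha.hookLen_insert_self hmi, if_neg]
    exact fun hab => h2.not_ge hab.le.2
  have hprod_m : hookProd m = ∏ y ∈ l.cells, hookLen m y := by
    rw [(addable_of_cells_eq_insert hbmi hm).hookProd_insert hm, hmi, prod_insert ha.1, hma,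
      one_mul]
  set P := ∏ y ∈ l.cells.erase (a.1, b.2), hookLen l y * hookLen m y
  have hP_mi_mj : hookProd mi * hookProd mj = (d + 1) ^ 2 * P := by
    rw [ha.hookProd_insert hmi, hb.hookProd_insert hmj, ← prod_mul_distrib,
      ← mul_prod_erase _ _ hc, hdmi, hdmj, prod_congr rfl fun y hy =>
        (hookLen_mul_hookLen_of_ne_corner ha.1 hb.1 h1 h2 hmi hmj hm (ne_of_mem_erase hy)).symm]
    ring
  have hP_l_m : hookProd l * hookProd m = d * (d + 2) * P := by
    rw [hookProd, hprod_m, ← prod_mul_distrib, ← mul_prod_erase _ _ hc, hdm]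
  rw [← ha.hookLen_corner hb h1 h2, ← Nat.cast_mul, ← Nat.cast_mul, hP_mi_mj, hP_l_m]
  push_cast
  ring

theorem hookProd_mul_hookProd (ha : Addable l a) (hb : Addable l b) (hab : a ≠ b)
    (hmi : mi.cells = insert a l.cells) (hmj : mj.cells = insert b l.cells)
    (hm : m.cells = insert b mi.cells) :
    (hookProd mi * hookProd mj : ℤ) * ((content a - content b) ^ 2 - 1) =
      hookProd l * hookProd m * (content a - content b) ^ 2 := by
  rcases ha.lt_lt_or_lt_lt hb hab with ⟨h1, h2⟩ | ⟨h1, h2⟩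
  · exact hookProd_mul_hookProd_of_lt ha hb h1 h2 hmi hmj hm
  · have hm' : m.cells = insert a mj.cells := by rw [hm, hmi, hmj, insert_comm]
    linear_combination hookProd_mul_hookProd_of_lt hb ha h1 h2 hmj hmi hm'

theorem hook_identity_two_adds_general (l : YoungDiagram) (i j : ℤ)
    (hij : 1 < |i - j|)
    (mi mj m : YoungDiagram) (hmi : AddBox l i mi) (hmj : AddBox l j mj)
    (hm : AddBox mi j m) :
    (1 - 1 / ((i : ℚ) - (j : ℚ)) ^ 2) * (((l.card : ℚ) + 1) / ((l.card : ℚ) + 2)) *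
      (dimPart l * dimPart m) / (dimPart mi * dimPart mj) = 1 := by
  obtain ⟨a, ha, rfl, hmi⟩ := hmi
  obtain ⟨b, hb, rfl, hmj⟩ := hmj
  obtain ⟨b', hb', hb'c, hm⟩ := hm
  obtain rfl : b = b' :=
    ((ha.of_addable_insert hmi hb' (hb'c ▸ hij)).eq_of_content_eq hb hb'c).symm
  have hab : a ≠ b := by
    rintro rfl
    simp at hij
  have key : (hookProd mi * hookProd mj : ℚ) * ((content a - content b) ^ 2 - 1) =
      hookProd l * hookProd m * (content a - content b) ^ 2 := by
    exact_mod_cast hookProd_mul_hookProd ha hb hab hmi hmj hm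
  have hq : (content a - content b : ℚ) ≠ 0 := by
    exact_mod_cast (abs_pos.1 (one_pos.trans hij))
  rw [dimPart_eq_s14, dimPart_eq_s14, dimPart_eq_s14, dimPart_eq_s14, card_of_cells_eq_insert hb'.1 hm,
    card_of_cells_eq_insert ha.1 hmi, card_of_cells_eq_insert hb.1 hmj, Nat.factorial_succ,
    Nat.factorial_succ]
  push_cast
  field_simp [hookProd_ne_zero]
  linear_combination ((l.card : ℚ) + 2) * key

/-- For `i, j ∈ B⁺(λ)` with `|i − j| > 1`:
`(1 − 1/(i−j)²)·((|λ|+1)/(|λ|+2))·(d_λ·d_{λ⊞i⊞j})/(d_{λ⊞i}·d_{λ⊞j}) = 1`. -/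
theorem hook_identity_two_adds (l : YoungDiagram) (i j : ℤ)
    (hi : i ∈ Bplus l) (hj : j ∈ Bplus l) (hij : 1 < |i - j|)
    (mi mj m : YoungDiagram) (hmi : AddBox l i mi) (hmj : AddBox l j mj)
    (hm : AddBox mi j m) :
    (1 - 1 / ((i : ℚ) - (j : ℚ)) ^ 2) * (((l.card : ℚ) + 1) / ((l.card : ℚ) + 2)) *
      (dimPart l * dimPart m) / (dimPart mi * dimPart mj) = 1 :=
  hook_identity_two_adds_general l i j hij mi mj m hmi hmj hm
end

section
/- Let λ be a Young diagram and let i ∈ B⁻(λ). Then Σ_{j ∈ B⁺(λ)} d_{λ ⊞ j} / (j − i) = 0. (Each term is well defined since B⁺(λ) ∩ B⁻(λ) = ∅, so j ≠ i for every j ∈ B⁺(λ).) -/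
/-!
Adding a box `x` of content `c` to `μ` changes exactly the hooks in the row and the column of `x`,
each by one. Along the row, the old hook lengths are `c - k - 1`, where `k` runs over the contents
of the cells just below the columns to the left of `x`; the products of these telescope over runs
of columns of equal length, leaving the addable and removable contents smaller than `c`. The column
of `x` is its row in the transposed diagram, which contributes the contents larger than `c`. This
gives the hook-ratio formula
  `H(μ ⊞ c) * ∏_{k ∈ B⁻(μ)} (c - k) = H(μ) * ∏_{k ∈ B⁺(μ) \ {c}} (c - k)`.
Hence `d_{μ ⊞ j} / (j - i) = (|μ| + 1)! / H(μ) * P(j) / ∏_{k ∈ B⁺(μ) \ {j}} (j - k)` with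
`P = ∏_{k ∈ B⁻(μ) \ {i}} (X - k)`, and the sum over `j ∈ B⁺(μ)` is the coefficient of `X^(|B⁺| - 1)`
in the Lagrange interpolant of `P` at the nodes `B⁺(μ)`, which vanishes because
`deg P = |B⁻| - 1 = |B⁺| - 2`.
-/

open Finset

/-- A maximal run `u s, u s + 1, …, u e` of consecutive values contributes `f (u s)` to the
product over run starts on the right and `f (u e + 1)` to the product over run ends on the left;
all other factors cancel in pairs `f (u j + 1) = f (u (j + 1))`. The last factor accounts for a run
that continues past `m - 1`. -/
theorem Finset.prod_range_mul_prod_runs {M : Type*} [CommMonoid M] (u : ℕ → ℤ) (f : ℤ → M)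
    (m : ℕ) :
    (∏ j ∈ range m, f (u j)) * (∏ j ∈ range m with u (j + 1) ≠ u j + 1, f (u j + 1)) *
        (if m = 0 ∨ u m ≠ u (m - 1) + 1 then 1 else f (u m)) =
      (∏ j ∈ range m, f (u j + 1)) *
        ∏ j ∈ range m with j = 0 ∨ u j ≠ u (j - 1) + 1, f (u j) := by
  induction m with
  | zero => simp
  | succ m ih =>
    have hm : m ∉ range m := notMem_range_self
    rw [prod_range_succ, prod_range_succ, range_add_one, filter_insert, filter_insert]
    simp only [Nat.add_sub_cancel, Nat.add_one_ne_zero, false_or]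
    have key (X : M) := congrArg (· * X) ih
    by_cases hstep : u (m + 1) = u m + 1 <;>
      by_cases hstart : m = 0 ∨ u m ≠ u (m - 1) + 1 <;>
      simp only [hstep, hstart, ne_eq, not_true_eq_false, not_false_eq_true, if_true, if_false,
        prod_insert (fun h => hm (mem_of_mem_filter m h))] at key ⊢
    all_goals first
      | simpa only [mul_one, one_mul, mul_comm, mul_assoc, mul_left_comm]
          using key (f (u m) * f (u m + 1))
      | simpa only [mul_one, one_mul, mul_comm, mul_assoc, mul_left_comm] using key (f (u m + 1))

theorem Finset.prod_filter_lt_neg {M : Type*} [CommMonoid M] {s t : Finset ℤ}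
    (hst : ∀ k, -k ∈ t ↔ k ∈ s) (a : ℤ) (g : ℤ → M) :
    ∏ k ∈ t with k < -a, g k = ∏ k ∈ s with a < k, g (-k) := by
  refine prod_nbij' (fun k => -k) (fun k => -k) ?_ ?_ (fun _ _ => neg_neg _)
    (fun _ _ => neg_neg _) (fun _ _ => by rw [neg_neg])
  · intro k hk
    simp only [mem_filter] at hk ⊢
    exact ⟨(hst _).mp (by rw [neg_neg]; exact hk.1), by omega⟩
  · intro k hk
    simp only [mem_filter] at hk ⊢
    exact ⟨(hst k).mpr hk.1, by omega⟩

theorem Finset.prod_erase_eq_prod_filter_lt_mul {α M : Type*} [LinearOrder α] [CommMonoid M]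
    (s : Finset α) (a : α) (g : α → M) :
    ∏ k ∈ s.erase a, g k = (∏ k ∈ s with k < a, g k) * ∏ k ∈ s with a < k, g k := by
  rw [← prod_filter_mul_prod_filter_not (s.erase a) (· < a)]
  congr 1 <;> refine prod_congr (Finset.ext fun k => ?_) fun _ _ => rfl <;> grind

theorem isLowerSet_preimage_swap {α β : Type*} [Preorder α] [Preorder β] {s : Set (α × β)} :
    IsLowerSet (Prod.swap ⁻¹' s) ↔ IsLowerSet s :=
  ⟨fun h => by
    simpa [Set.preimage_preimage] using IsLowerSet.preimage h (f := Prod.swap)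
      fun _ _ hab => Prod.swap_le_swap.mpr hab,
    fun h => IsLowerSet.preimage h fun _ _ hab => Prod.swap_le_swap.mpr hab⟩

open Polynomial in
theorem Lagrange.sum_eval_div_prod_sub_eq_zero {F ι : Type*} [Field F] [DecidableEq ι]
    {s : Finset ι} {v : ι → F} (hvs : Set.InjOn v s) {P : F[X]} (hP : P.natDegree < #s - 1) :
    ∑ i ∈ s, P.eval (v i) / ∏ j ∈ s.erase i, (v i - v j) = 0 := by
  rw [← Lagrange.coeff_eq_sum hvs (degree_le_natDegree.trans_lt (by norm_cast; omega)),
    coeff_eq_zero_of_natDegree_lt hP]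

theorem content_swap (x : ℕ × ℕ) : content x.swap = -content x := by
  simp only [content, Prod.fst_swap, Prod.snd_swap, neg_sub]

namespace YoungDiagram

variable (μ : YoungDiagram)

/-- The content of the cell `(μ.colLen c, c)` just below column `c`. -/
def outerContent (c : ℕ) : ℤ := c - μ.colLen c

def addableCols : Finset ℕ :=
  {c ∈ range (μ.rowLen 0 + 1) | c = 0 ∨ μ.colLen c < μ.colLen (c - 1)}

def removableCols : Finset ℕ := {c ∈ range (μ.rowLen 0) | μ.colLen (c + 1) < μ.colLen c}

def addableContents : Finset ℤ := μ.addableCols.image μ.outerContent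

def removableContents : Finset ℤ := μ.removableCols.image (μ.outerContent · + 1)

variable {μ}

theorem mem_addableCols {c : ℕ} : c ∈ μ.addableCols ↔ c = 0 ∨ μ.colLen c < μ.colLen (c - 1) := by
  refine ⟨fun h => (mem_filter.mp h).2, fun h => mem_filter.mpr ⟨?_, h⟩⟩
  rw [mem_range, Nat.lt_succ_iff]
  rcases h with rfl | h
  · exact Nat.zero_le _
  · have : (0, c - 1) ∈ μ := mem_iff_lt_colLen.mpr (by omega)
    have := mem_iff_lt_rowLen.mp this
    omega

theorem mem_removableCols {c : ℕ} : c ∈ μ.removableCols ↔ μ.colLen (c + 1) < μ.colLen c := by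
  refine ⟨fun h => (mem_filter.mp h).2, fun h => mem_filter.mpr ⟨?_, h⟩⟩
  exact mem_range.mpr (mem_iff_lt_rowLen.mp (mem_iff_lt_colLen.mpr (by omega)))

theorem addableCols_eq_insert : μ.addableCols = insert 0 (μ.removableCols.image (· + 1)) := by
  ext c
  simp only [mem_addableCols, mem_insert, mem_image, mem_removableCols]
  constructor
  · rintro (rfl | h)
    · exact Or.inl rfl
    · rcases c with _ | d
      · exact Or.inl rfl
      · exact Or.inr ⟨d, h, rfl⟩
  · rintro (rfl | ⟨d, h, rfl⟩)
    · exact Or.inl rfl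
    · exact Or.inr h

theorem card_addableCols : #μ.addableCols = #μ.removableCols + 1 := by
  rw [addableCols_eq_insert, card_insert_of_notMem (by simp),
    card_image_of_injective _ (add_left_injective 1)]

theorem outerContent_strictMono : StrictMono μ.outerContent :=
  strictMono_nat_of_lt_succ fun c => by
    have := μ.colLen_anti c (c + 1) c.le_succ
    simp only [outerContent]
    omega

theorem mem_addableCols_iff_outerContent {c : ℕ} :
    c ∈ μ.addableCols ↔ c = 0 ∨ μ.outerContent c ≠ μ.outerContent (c - 1) + 1 := by
  rw [mem_addableCols]
  rcases c with _ | c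
  · simp
  · have := μ.colLen_anti c (c + 1) c.le_succ
    simp only [outerContent, Nat.add_sub_cancel, Nat.add_one_ne_zero, false_or]
    push_cast
    omega

theorem mem_removableCols_iff_outerContent {c : ℕ} :
    c ∈ μ.removableCols ↔ μ.outerContent (c + 1) ≠ μ.outerContent c + 1 := by
  have := μ.colLen_anti c (c + 1) c.le_succ
  rw [mem_removableCols, outerContent, outerContent]
  push_cast
  omega

theorem outerContent_add_one_lt_iff {j c : ℕ} (hj : j ∈ μ.removableCols) :
    μ.outerContent j + 1 < μ.outerContent c ↔ j < c := by
  rw [mem_removableCols] at hj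
  refine ⟨fun h => μ.outerContent_strictMono.lt_iff_lt.mp (by omega), fun h => ?_⟩
  have := μ.outerContent_strictMono.monotone (show j + 1 ≤ c from h)
  simp only [outerContent] at this ⊢
  push_cast at this
  omega

theorem addable_iff {x : ℕ × ℕ} : Addable μ x ↔ x.1 = μ.colLen x.2 ∧ x.2 ∈ μ.addableCols := by
  obtain ⟨r, c⟩ := x
  simp only [Addable, mem_addableCols, mem_iff_lt_colLen, not_lt]
  constructor
  · rintro ⟨hr, hl⟩
    have below : ∀ y ≤ (r, c), y ≠ (r, c) → y ∈ μ := fun y hy hne => by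
      simpa [hne] using hl hy (by simp)
    have hr : r = μ.colLen c := by
      by_contra hne
      exact (mem_iff_lt_colLen.mp (below (μ.colLen c, c) (by simp [hr]) (by simp; omega))).false
    refine ⟨hr, or_iff_not_imp_left.mpr fun hc => ?_⟩
    have := mem_iff_lt_colLen.mp (below (r, c - 1) (by simp) (by simp; omega))
    omega
  · rintro ⟨rfl, hc⟩
    refine ⟨le_rfl, fun a b hba ha => ?_⟩
    simp only [coe_insert, Set.mem_insert_iff, mem_coe, mem_cells] at ha ⊢
    rcases ha with rfl | ha
    · obtain ⟨h1, h2⟩ := Prod.mk_le_mk.mp hba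
      rcases eq_or_lt_of_le h2 with h2 | h2
      · rcases eq_or_lt_of_le h1 with h1 | h1
        · exact Or.inl (Prod.ext h1 h2)
        · exact Or.inr (mem_iff_lt_colLen.mpr (h2 ▸ h1))
      · refine Or.inr (mem_iff_lt_colLen.mpr ?_)
        have := μ.colLen_anti b.2 (c - 1) (by omega)
        omega
    · exact Or.inr (μ.isLowerSet hba ha)

theorem removable_iff {x : ℕ × ℕ} :
    Removable μ x ↔ x.1 + 1 = μ.colLen x.2 ∧ x.2 ∈ μ.removableCols := by
  obtain ⟨r, c⟩ := x
  simp only [Removable, mem_removableCols]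
  constructor
  · rintro ⟨hx, hl⟩
    have above : ∀ y, (r, c) ≤ y → y ≠ (r, c) → y ∉ μ := fun y hy hne hy' => by
      simpa using hl hy (by simp [hne, hy'])
    have hc := mem_iff_lt_colLen.mp hx
    refine ⟨?_, ?_⟩
    · by_contra hne
      exact above (r + 1, c) (by simp) (by simp) (mem_iff_lt_colLen.mpr (by omega))
    · by_contra hle
      exact above (r, c + 1) (by simp) (by simp) (mem_iff_lt_colLen.mpr (by omega))
  · rintro ⟨hr, hc⟩
    refine ⟨mem_iff_lt_colLen.mpr (by omega), fun a b hba ha => ?_⟩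
    simp only [coe_erase, Set.mem_sdiff, mem_coe, mem_cells, Set.mem_singleton_iff] at ha ⊢
    refine ⟨μ.isLowerSet hba ha.1, ?_⟩
    rintro rfl
    obtain ⟨h1, h2⟩ := Prod.mk_le_mk.mp hba
    have ha1 := mem_iff_lt_colLen.mp ha.1
    rcases eq_or_lt_of_le h2 with h2 | h2
    · exact ha.2 (Prod.ext (by rw [← h2] at ha1; omega) h2.symm)
    · have := μ.colLen_anti (c + 1) a.2 h2
      omega

theorem addable_transpose {x : ℕ × ℕ} : Addable μ.transpose x ↔ Addable μ x.swap := by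
  have : (↑(insert x μ.transpose.cells) : Set (ℕ × ℕ)) =
      Prod.swap ⁻¹' ↑(insert x.swap μ.cells) := by
    ext y; simp [Prod.swap_inj]
  rw [Addable, Addable, mem_transpose, this, isLowerSet_preimage_swap]

theorem removable_transpose {x : ℕ × ℕ} : Removable μ.transpose x ↔ Removable μ x.swap := by
  have : (↑(μ.transpose.cells.erase x) : Set (ℕ × ℕ)) = Prod.swap ⁻¹' ↑(μ.cells.erase x.swap) := by
    ext y; simp [Prod.swap_inj]
  rw [Removable, Removable, mem_transpose, this, isLowerSet_preimage_swap]

theorem rowLen_eq_of_addable {x : ℕ × ℕ} (hx : Addable μ x) : μ.rowLen x.1 = x.2 := by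
  have := (addable_iff.mp (addable_transpose (x := x.swap) |>.mpr (by rwa [Prod.swap_swap]))).1
  rw [Prod.fst_swap, Prod.snd_swap, colLen_transpose] at this
  exact this.symm

theorem content_eq_outerContent {x : ℕ × ℕ} (hx : x.1 = μ.colLen x.2) :
    content x = μ.outerContent x.2 := by
  rw [content, outerContent, hx]

theorem mem_addableContents {k : ℤ} : k ∈ μ.addableContents ↔ k ∈ Bplus μ := by
  refine ⟨fun hk => ?_, fun ⟨x, hx, hk⟩ => ?_⟩
  · obtain ⟨c, hc, rfl⟩ := mem_image.mp hk
    exact ⟨(μ.colLen c, c), addable_iff.mpr ⟨rfl, hc⟩, content_eq_outerContent rfl⟩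
  · obtain ⟨hr, hc⟩ := addable_iff.mp hx
    exact mem_image.mpr ⟨x.2, hc, by rw [← hk, content_eq_outerContent hr]⟩

theorem mem_removableContents {k : ℤ} : k ∈ μ.removableContents ↔ k ∈ Bminus μ := by
  refine ⟨fun hk => ?_, fun ⟨x, hx, hk⟩ => ?_⟩
  · obtain ⟨c, hc, rfl⟩ := mem_image.mp hk
    refine ⟨(μ.colLen c - 1, c), removable_iff.mpr ⟨?_, hc⟩, ?_⟩
    · have := mem_removableCols.mp hc
      dsimp only
      omega
    · have := mem_removableCols.mp hc
      simp only [content, outerContent]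
      omega
  · obtain ⟨hr, hc⟩ := removable_iff.mp hx
    refine mem_image.mpr ⟨x.2, hc, ?_⟩
    rw [← hk, content, outerContent, ← hr]
    push_cast
    ring

theorem neg_mem_addableContents_transpose {k : ℤ} :
    -k ∈ μ.transpose.addableContents ↔ k ∈ μ.addableContents := by
  rw [mem_addableContents, mem_addableContents]
  constructor <;> rintro ⟨x, hx, hk⟩
  · exact ⟨x.swap, addable_transpose.mp hx, by rw [content_swap, hk, neg_neg]⟩
  · exact ⟨x.swap, addable_transpose.mpr (by rwa [Prod.swap_swap]), by rw [content_swap, hk]⟩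

theorem neg_mem_removableContents_transpose {k : ℤ} :
    -k ∈ μ.transpose.removableContents ↔ k ∈ μ.removableContents := by
  rw [mem_removableContents, mem_removableContents]
  constructor <;> rintro ⟨x, hx, hk⟩
  · exact ⟨x.swap, removable_transpose.mp hx, by rw [content_swap, hk, neg_neg]⟩
  · exact ⟨x.swap, removable_transpose.mpr (by rwa [Prod.swap_swap]), by rw [content_swap, hk]⟩

theorem card_addableContents : #μ.addableContents = #μ.removableContents + 1 := by
  rw [addableContents, removableContents,
    card_image_of_injective _ μ.outerContent_strictMono.injective,
    card_image_of_injective _ fun _ _ h => μ.outerContent_strictMono.injective (add_right_cancel h),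
    card_addableCols]

theorem notMem_removableContents {k : ℤ} (hk : k ∈ μ.addableContents) :
    k ∉ μ.removableContents := by
  obtain ⟨c, -, rfl⟩ := mem_image.mp hk
  intro hk'
  obtain ⟨j, hj, hjc⟩ := mem_image.mp hk'
  rcases lt_or_ge j c with h | h
  · exact (outerContent_add_one_lt_iff hj).mpr h |>.ne hjc
  · have := μ.outerContent_strictMono.monotone h
    omega

theorem prod_addableContents_filter_lt {M : Type*} [CommMonoid M] (c : ℕ) (f : ℤ → M) :
    ∏ k ∈ μ.addableContents with k < μ.outerContent c, f k =
      ∏ j ∈ range c with j = 0 ∨ μ.outerContent j ≠ μ.outerContent (j - 1) + 1,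
        f (μ.outerContent j) := by
  rw [addableContents, filter_image, prod_image μ.outerContent_strictMono.injective.injOn]
  refine prod_congr (Finset.ext fun j => ?_) fun _ _ => rfl
  rw [mem_filter, mem_filter, mem_range, mem_addableCols_iff_outerContent,
    μ.outerContent_strictMono.lt_iff_lt, and_comm]

theorem prod_removableContents_filter_lt {M : Type*} [CommMonoid M] (c : ℕ) (f : ℤ → M) :
    ∏ k ∈ μ.removableContents with k < μ.outerContent c, f k =
      ∏ j ∈ range c with μ.outerContent (j + 1) ≠ μ.outerContent j + 1,
        f (μ.outerContent j + 1) := by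
  rw [removableContents, filter_image,
    prod_image fun _ _ _ _ h => μ.outerContent_strictMono.injective (add_right_cancel h)]
  refine prod_congr (Finset.ext fun j => ?_) fun _ _ => rfl
  rw [mem_filter, mem_filter, mem_range]
  constructor
  · rintro ⟨hj, hlt⟩
    exact ⟨(outerContent_add_one_lt_iff hj).mp hlt, mem_removableCols_iff_outerContent.mp hj⟩
  · rintro ⟨hlt, hj⟩
    have hj := mem_removableCols_iff_outerContent.mpr hj
    exact ⟨hj, (outerContent_add_one_lt_iff hj).mpr hlt⟩

theorem hookLen_add_add {r c : ℕ} (h : (r, c) ∈ μ) :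
    hookLen μ (r, c) + r + c + 1 = μ.rowLen r + μ.colLen c := by
  have hr := mem_iff_lt_rowLen.mp h
  have hc := mem_iff_lt_colLen.mp h
  have hook : {y ∈ μ.cells | (y.1 = r ∧ c ≤ y.2) ∨ (y.2 = c ∧ r ≤ y.1)} =
      {r} ×ˢ Ico c (μ.rowLen r) ∪ Ico (r + 1) (μ.colLen c) ×ˢ {c} := by
    ext ⟨a, b⟩
    simp only [mem_filter, mem_cells, mem_union, mem_product, mem_singleton, mem_Ico]
    constructor
    · rintro ⟨hab, ⟨rfl, hb⟩ | ⟨rfl, ha⟩⟩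
      · exact Or.inl ⟨rfl, hb, mem_iff_lt_rowLen.mp hab⟩
      · rcases eq_or_lt_of_le ha with rfl | ha
        · exact Or.inl ⟨rfl, le_rfl, hr⟩
        · exact Or.inr ⟨⟨ha, mem_iff_lt_colLen.mp hab⟩, rfl⟩
    · rintro (⟨rfl, hb, hb'⟩ | ⟨⟨ha, ha'⟩, rfl⟩)
      · exact ⟨mem_iff_lt_rowLen.mpr hb', Or.inl ⟨rfl, hb⟩⟩
      · exact ⟨mem_iff_lt_colLen.mpr ha', Or.inr ⟨rfl, Nat.le_of_succ_le ha⟩⟩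
  have hdisj : Disjoint ({r} ×ˢ Ico c (μ.rowLen r)) (Ico (r + 1) (μ.colLen c) ×ˢ {c}) :=
    disjoint_left.mpr fun ⟨a, b⟩ h₁ h₂ => by simp at h₁ h₂; omega
  rw [hookLen, hook, card_union_of_disjoint hdisj, card_product, card_product]
  simp only [card_singleton, Nat.card_Ico]
  omega

theorem hookLen_transpose {r c : ℕ} (h : (r, c) ∈ μ) :
    hookLen μ.transpose (c, r) = hookLen μ (r, c) := by
  have hT := hookLen_add_add (μ := μ.transpose) (mem_transpose.mpr h)
  rw [rowLen_transpose, colLen_transpose] at hT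
  have := hookLen_add_add h
  omega

theorem hookLen_pos {y : ℕ × ℕ} (hy : y ∈ μ) : 0 < hookLen μ y :=
  card_pos.mpr ⟨y, mem_filter.mpr ⟨(mem_cells y).mpr hy, Or.inl ⟨rfl, le_rfl⟩⟩⟩

theorem prod_hookLen_ne_zero : ∏ y ∈ μ.cells, (hookLen μ y : ℚ) ≠ 0 :=
  prod_ne_zero_iff.mpr fun y hy => Nat.cast_ne_zero.mpr (hookLen_pos ((mem_cells y).mp hy)).ne'

theorem hookLen_of_cells_eq_insert {ν : YoungDiagram} {x y : ℕ × ℕ} (hx : x ∉ μ)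
    (hν : ν.cells = insert x μ.cells) (hy : y ∈ μ) :
    hookLen ν y = hookLen μ y + if y.1 = x.1 ∨ y.2 = x.2 then 1 else 0 := by
  have hxy : ((x.1 = y.1 ∧ y.2 ≤ x.2) ∨ (x.2 = y.2 ∧ y.1 ≤ x.1)) ↔ (y.1 = x.1 ∨ y.2 = x.2) := by
    have : ¬ x ≤ y := fun hle => hx (μ.isLowerSet hle hy)
    rw [Prod.le_def] at this
    omega
  rw [hookLen, hookLen, hν, filter_insert]
  simp only [hxy]
  split_ifs
  · exact card_insert_of_notMem fun h => hx (mem_filter.mp h).1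
  · rfl

theorem hookLen_of_cells_eq_insert_self {ν : YoungDiagram} {x : ℕ × ℕ} (hx : x ∉ μ)
    (hν : ν.cells = insert x μ.cells) : hookLen ν x = 1 := by
  rw [hookLen, hν, filter_insert, if_pos (Or.inl ⟨rfl, le_rfl⟩), card_insert_of_notMem
    fun h => hx (mem_filter.mp h).1, add_eq_right, card_eq_zero, filter_eq_empty_iff]
  rintro y hy (⟨h₁, h₂⟩ | ⟨h₁, h₂⟩) <;>
    exact hx (μ.isLowerSet (Prod.mk_le_mk.mpr ⟨by omega, by omega⟩) hy)

theorem prod_filter_fst_eq_or_snd_eq {M : Type*} [CommMonoid M] {r c : ℕ} (hr : μ.rowLen r = c)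
    (hc : μ.colLen c = r) (g : ℕ × ℕ → M) :
    ∏ y ∈ μ.cells with y.1 = r ∨ y.2 = c, g y =
      (∏ j ∈ range c, g (r, j)) * ∏ i ∈ range r, g (i, c) := by
  have hcross : {y ∈ μ.cells | y.1 = r ∨ y.2 = c} = {r} ×ˢ range c ∪ range r ×ˢ {c} := by
    ext ⟨a, b⟩
    simp only [mem_filter, mem_cells, mem_union, mem_product, mem_singleton, mem_range]
    constructor
    · rintro ⟨hab, rfl | rfl⟩
      · exact Or.inl ⟨rfl, hr ▸ mem_iff_lt_rowLen.mp hab⟩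
      · exact Or.inr ⟨hc ▸ mem_iff_lt_colLen.mp hab, rfl⟩
    · rintro (⟨rfl, hb⟩ | ⟨ha, rfl⟩)
      · exact ⟨mem_iff_lt_rowLen.mpr (hr ▸ hb), Or.inl rfl⟩
      · exact ⟨mem_iff_lt_colLen.mpr (hc ▸ ha), Or.inr rfl⟩
  have hdisj : Disjoint ({r} ×ˢ range c) (range r ×ˢ {c}) :=
    disjoint_left.mpr fun ⟨a, b⟩ h₁ h₂ => by simp at h₁ h₂; omega
  rw [hcross, prod_union hdisj, prod_product, prod_singleton, prod_product]
  simp only [prod_singleton]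

theorem prod_hookLen_row_mul {M : Type*} [CommMonoid M] {x : ℕ × ℕ} (hx : Addable μ x)
    (f : ℤ → M) :
    (∏ j ∈ range x.2, f (content x - (hookLen μ (x.1, j) + 1))) *
        ∏ k ∈ μ.removableContents with k < content x, f k =
      (∏ j ∈ range x.2, f (content x - hookLen μ (x.1, j))) *
        ∏ k ∈ μ.addableContents with k < content x, f k := by
  obtain ⟨hr, hc⟩ := addable_iff.mp hx
  have hrow := rowLen_eq_of_addable hx
  have hcontent := content_eq_outerContent hr
  obtain ⟨r, c⟩ := x
  dsimp only at hr hc hrow hcontent ⊢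
  subst hr
  have hook : ∀ j ∈ range c,
      content (μ.colLen c, c) - hookLen μ (μ.colLen c, j) = μ.outerContent j + 1 := by
    intro j hj
    have := hookLen_add_add (mem_iff_lt_rowLen.mpr (hrow ▸ mem_range.mp hj))
    rw [hrow] at this
    rw [hcontent, outerContent, outerContent]
    omega
  have hook₁ : ∏ j ∈ range c, f (content (μ.colLen c, c) - (hookLen μ (μ.colLen c, j) + 1)) =
      ∏ j ∈ range c, f (μ.outerContent j) :=
    prod_congr rfl fun j hj => by rw [sub_add_eq_sub_sub, hook j hj, add_sub_cancel_right]
  have hook₂ : ∏ j ∈ range c, f (content (μ.colLen c, c) - hookLen μ (μ.colLen c, j)) =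
      ∏ j ∈ range c, f (μ.outerContent j + 1) :=
    prod_congr rfl fun j hj => by rw [hook j hj]
  rw [hook₁, hook₂, hcontent, prod_addableContents_filter_lt, prod_removableContents_filter_lt]
  have := prod_range_mul_prod_runs μ.outerContent f c
  rwa [if_pos (mem_addableCols_iff_outerContent.mp hc), mul_one] at this

/-- The column of `x` is the row of `x.swap` in the transpose; there the factors carry a sign
`(-1) ^ x.1` on both sides, which cancels. -/
theorem prod_hookLen_col_mul {x : ℕ × ℕ} (hx : Addable μ x) :
    (∏ i ∈ range x.1, (hookLen μ (i, x.2) + 1 : ℤ)) *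
        ∏ k ∈ μ.removableContents with content x < k, (content x - k) =
      (∏ i ∈ range x.1, (hookLen μ (i, x.2) : ℤ)) *
        ∏ k ∈ μ.addableContents with content x < k, (content x - k) := by
  have hxT : Addable μ.transpose x.swap := addable_transpose.mpr (by rwa [Prod.swap_swap])
  have hrow := prod_hookLen_row_mul hxT (content x + ·)
  have hcol : ∀ i ∈ range x.1, hookLen μ.transpose (x.2, i) = hookLen μ (i, x.2) := fun i hi =>
    hookLen_transpose (mem_iff_lt_colLen.mpr ((addable_iff.mp hx).1 ▸ mem_range.mp hi))
  simp only [Prod.fst_swap, Prod.snd_swap, content_swap,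
    prod_filter_lt_neg (fun _ => neg_mem_addableContents_transpose),
    prod_filter_lt_neg (fun _ => neg_mem_removableContents_transpose)] at hrow
  have hook₁ : ∏ i ∈ range x.1, (content x + (-content x - (hookLen μ.transpose (x.2, i) + 1))) =
      ∏ i ∈ range x.1, -(hookLen μ (i, x.2) + 1 : ℤ) :=
    prod_congr rfl fun i hi => by rw [hcol i hi]; ring
  have hook₂ : ∏ i ∈ range x.1, (content x + (-content x - hookLen μ.transpose (x.2, i))) =
      ∏ i ∈ range x.1, -(hookLen μ (i, x.2) : ℤ) :=
    prod_congr rfl fun i hi => by rw [hcol i hi]; ring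
  simp only [hook₁, hook₂, prod_neg, ← sub_eq_add_neg, mul_assoc] at hrow
  exact mul_left_cancel₀ (pow_ne_zero _ (neg_ne_zero.mpr one_ne_zero)) hrow

theorem prod_hookLen_insert_mul {ν : YoungDiagram} {x : ℕ × ℕ} (hx : Addable μ x)
    (hν : ν.cells = insert x μ.cells) :
    (∏ y ∈ ν.cells, (hookLen ν y : ℤ)) * ∏ k ∈ μ.removableContents, (content x - k) =
      (∏ y ∈ μ.cells, (hookLen μ y : ℤ)) *
        ∏ k ∈ μ.addableContents.erase (content x), (content x - k) := by
  have hr := rowLen_eq_of_addable hx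
  have hc := (addable_iff.mp hx).1.symm
  have hμ : ∏ y ∈ μ.cells, (hookLen μ y : ℤ) =
      (∏ j ∈ range x.2, (hookLen μ (x.1, j) : ℤ)) * (∏ i ∈ range x.1, (hookLen μ (i, x.2) : ℤ)) *
        ∏ y ∈ μ.cells with ¬(y.1 = x.1 ∨ y.2 = x.2), (hookLen μ y : ℤ) := by
    rw [← prod_filter_mul_prod_filter_not μ.cells (fun y => y.1 = x.1 ∨ y.2 = x.2),
      prod_filter_fst_eq_or_snd_eq hr hc]
  have hν' : ∏ y ∈ ν.cells, (hookLen ν y : ℤ) =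
      (∏ j ∈ range x.2, (hookLen μ (x.1, j) + 1 : ℤ)) *
        (∏ i ∈ range x.1, (hookLen μ (i, x.2) + 1 : ℤ)) *
        ∏ y ∈ μ.cells with ¬(y.1 = x.1 ∨ y.2 = x.2), (hookLen μ y : ℤ) := by
    rw [hν, prod_insert hx.1, hookLen_of_cells_eq_insert_self hx.1 hν, Nat.cast_one, one_mul,
      prod_congr rfl fun y hy => by rw [hookLen_of_cells_eq_insert hx.1 hν ((mem_cells y).mp hy)],
      ← prod_filter_mul_prod_filter_not μ.cells (fun y => y.1 = x.1 ∨ y.2 = x.2),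
      prod_filter_fst_eq_or_snd_eq (g := fun y => ((hookLen μ y + _ : ℕ) : ℤ)) hr hc]
    congr 1
    · simp
    · exact prod_congr rfl fun y hy => by rw [if_neg (mem_filter.mp hy).2, add_zero]
  have hrow := prod_hookLen_row_mul hx (content x - ·)
  simp only [sub_sub_cancel] at hrow
  have hcol := prod_hookLen_col_mul hx
  rw [← erase_eq_of_notMem (notMem_removableContents (mem_addableContents.mpr ⟨x, hx, rfl⟩)),
    prod_erase_eq_prod_filter_lt_mul, prod_erase_eq_prod_filter_lt_mul, hμ, hν']
  set T := ∏ y ∈ μ.cells with ¬(y.1 = x.1 ∨ y.2 = x.2), (hookLen μ y : ℤ)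
  linear_combination
    T * (∏ i ∈ range x.1, (hookLen μ (i, x.2) + 1 : ℤ)) *
        (∏ k ∈ μ.removableContents with content x < k, (content x - k)) * hrow +
      T * (∏ j ∈ range x.2, (hookLen μ (x.1, j) : ℤ)) *
        (∏ k ∈ μ.addableContents with k < content x, (content x - k)) * hcol

theorem dimPart_div_content_sub {ν : YoungDiagram} {x : ℕ × ℕ} {i : ℤ} (hx : Addable μ x)
    (hν : ν.cells = insert x μ.cells) (hi : i ∈ μ.removableContents) :
    dimPart ν / (content x - i) =
      (Nat.factorial (μ.card + 1) : ℚ) / (∏ y ∈ μ.cells, (hookLen μ y : ℚ)) *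
        ((∏ k ∈ μ.removableContents.erase i, (content x - k : ℚ)) /
          ∏ k ∈ μ.addableContents.erase (content x), (content x - k : ℚ)) := by
  have hcard : ν.card = μ.card + 1 := by
    rw [YoungDiagram.card, YoungDiagram.card, hν, card_insert_of_notMem hx.1]
  have hratio : (∏ y ∈ ν.cells, (hookLen ν y : ℚ)) *
      ((content x - i) * ∏ k ∈ μ.removableContents.erase i, (content x - k : ℚ)) =
      (∏ y ∈ μ.cells, (hookLen μ y : ℚ)) *
        ∏ k ∈ μ.addableContents.erase (content x), (content x - k : ℚ) := by
    rw [mul_prod_erase _ (fun k : ℤ => (content x - k : ℚ)) hi]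
    exact_mod_cast prod_hookLen_insert_mul hx hν
  have hsub : (content x - i : ℚ) ≠ 0 := by
    rw [sub_ne_zero, Ne, Int.cast_inj]
    rintro rfl
    exact notMem_removableContents (mem_addableContents.mpr ⟨x, hx, rfl⟩) hi
  have hdist : ∏ k ∈ μ.addableContents.erase (content x), (content x - k : ℚ) ≠ 0 :=
    prod_ne_zero_iff.mpr fun k hk => by
      rw [sub_ne_zero, Ne, Int.cast_inj]
      exact (ne_of_mem_erase hk).symm
  rw [dimPart, hcard]
  have hν₀ := prod_hookLen_ne_zero (μ := ν)
  have hμ₀ := prod_hookLen_ne_zero (μ := μ)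
  field_simp
  linear_combination -hratio

end YoungDiagram

/-- For a Young diagram `λ` and `i ∈ B⁻(λ)`: `Σ_{j ∈ B⁺(λ)} d_{λ⊞j}/(j−i) = 0`. -/
theorem sum_dim_add_over_diff_eq_zero (l : YoungDiagram)
    (i : ℤ) (hi : i ∈ Bminus l)
    (S : Finset ℤ) (hS : ∀ j : ℤ, j ∈ S ↔ j ∈ Bplus l)
    (D : ℤ → YoungDiagram) (hD : ∀ j ∈ S, AddBox l j (D j)) :
    ∑ j ∈ S, dimPart (D j) / ((j : ℚ) - (i : ℚ)) = 0 := by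
  replace hi : i ∈ l.removableContents := YoungDiagram.mem_removableContents.mpr hi
  obtain rfl : S = l.addableContents :=
    Finset.ext fun j => (hS j).trans YoungDiagram.mem_addableContents.symm
  have hterm : ∀ j ∈ l.addableContents, dimPart (D j) / ((j : ℚ) - i) =
      (Nat.factorial (l.card + 1) : ℚ) / (∏ y ∈ l.cells, (hookLen l y : ℚ)) *
        ((Lagrange.nodal (l.removableContents.erase i) (Int.cast : ℤ → ℚ)).eval (j : ℚ) /
          ∏ k ∈ l.addableContents.erase j, ((j : ℚ) - k)) := by
    intro j hj
    obtain ⟨x, hx, rfl, hcells⟩ := hD j hj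
    rw [Lagrange.eval_nodal, YoungDiagram.dimPart_div_content_sub hx hcells hi]
  rw [sum_congr rfl hterm, ← mul_sum, Lagrange.sum_eval_div_prod_sub_eq_zero, mul_zero]
  · exact Int.cast_injective.injOn
  · rw [Lagrange.natDegree_nodal, card_erase_of_mem hi, YoungDiagram.card_addableContents]
    have := card_pos.mpr ⟨i, hi⟩
    omega
end
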